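/- Let n ∈ ℕ, let W = {w_1, …, w_n, w, w'_2, w'_3, …, w'_n} and M = {m_1, …, m_n, m'_1, …, m'_n} be disjoint sets of size 2n, and let x = (x^i_j) and y = (y^i_j) be Boolean vectors indexed by P_n = {(i,j) : 1 ≤ i,j ≤ n, i ≠ j}. Construct partial preference lists: the list of w_i consists of all m_j with x^i_j = 1 (sorted by j) followed by m'_i; the list of w consists of all m'_j sorted by j; the list of each w'_i is empty; the list of m_j consists of all w_i with y^i_j = 1 (sorted by i); the list of m'_j consists of w_j followed by w. Then w is single in some stable marriage with respect to these preference lists if and only if there is no (i,j) ∈ P_n with x^i_j = y^i_j = 1. -/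

import Mathlib

/-- `listPref l a b`: in the (possibly partial) preference list `l`
(most-preferred first), `a` is preferred over `b`: `a` is on the list, and
either `b` is not on the list or `a` precedes `b` on it. -/
def listPref {α : Type} [DecidableEq α] (l : List α) (a b : α) : Prop :=
  a ∈ l ∧ (b ∈ l → l.idxOf a < l.idxOf b)

/-- A marriage between (a subset of) the women `Fin nw` and (a subset of) the
men `Fin nm`: `μ i = some j` means woman `i` is married to man `j`, and
`μ i = none` means woman `i` is single; no two women share a husband. -/
def IsMarriage {nw nm : ℕ} (μ : Fin nw → Option (Fin nm)) : Prop :=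
  ∀ i i' j, μ i = some j → μ i' = some j → i = i'

/-- Stability of a marriage `μ` with respect to (possibly partial) preference
lists `wL` (women's lists of men) and `mL` (men's lists of women): every married
participant is married to someone on their own list, and there is no blocking
pair, i.e. no pair `(i, j)`, with `j` on `i`'s list and `i` on `j`'s list, such
that woman `i` is single or prefers `j` over her spouse, and man `j` is single
or prefers `i` over his spouse. -/
def StableL {nw nm : ℕ} (wL : Fin nw → List (Fin nm)) (mL : Fin nm → List (Fin nw))
    (μ : Fin nw → Option (Fin nm)) : Prop :=
  (∀ i j, μ i = some j → j ∈ wL i ∧ i ∈ mL j) ∧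
  ¬∃ (i : Fin nw) (j : Fin nm),
      j ∈ wL i ∧ i ∈ mL j ∧
      (∀ j', μ i = some j' → listPref (wL i) j j') ∧
      (∀ i', μ i' = some j → listPref (mL j) i i')

/-- The women's preference lists built from `x` (0-indexed).  The women are
indexed by `Fin (n + n)`: index `u < n` is `w_{u+1}`, index `n` is the designated
woman `w`, and index `n + t` for `t ≥ 1` is `w'_{t+1}`.  The men are indexed by
`Fin (n + n)`: index `j < n` is `m_{j+1}` and index `n + j` is `m'_{j+1}`.
Woman `w_i`'s list is all `m_j` with `j ≠ i` and `x i j = 1` (sorted by `j`),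
followed by `m'_i`; the list of `w` is all the `m'_j`, sorted by `j`; the lists
of the `w'_i` are empty. -/
def sWL (n : ℕ) (x : ℕ → ℕ → Bool) : Fin (n + n) → List (Fin (n + n)) :=
  fun u =>
    if h : u.val < n then
      (((List.finRange n).filter
          (fun j => decide (j.val ≠ u.val) && x u.val j.val)).map (Fin.castAdd n))
        ++ [Fin.natAdd n ⟨u.val, h⟩]
    else if u.val = n then (List.finRange n).map (Fin.natAdd n)
    else []

/-- The men's preference lists built from `y` (0-indexed, same indexing as in
`sWL`).  Man `m_j`'s list is all `w_i` with `i ≠ j` and `y i j = 1` (sorted by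
`i`); man `m'_j`'s list is `w_j` followed by `w`. -/
def sML (n : ℕ) (y : ℕ → ℕ → Bool) : Fin (n + n) → List (Fin (n + n)) :=
  fun v =>
    if h : v.val < n then
      ((List.finRange n).filter
          (fun i => decide (i.val ≠ v.val) && y i.val v.val)).map (Fin.castAdd n)
    else
      [Fin.castAdd n ⟨v.val - n, by have := v.isLt; omega⟩,
       Fin.natAdd n ⟨0, by have := v.isLt; omega⟩]



/-!
If `w` is single in a stable marriage, every `m'_k` must be married to `w_k`, since otherwise
`(w, m'_k)` blocks. Then every `m_j` is single (its list holds only `w_i`s), and a pair `(i, j)`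
with `x^i_j = y^i_j = 1` would make `(w_i, m_j)` block, as `m'_i` is last on `w_i`'s list. So a
stable marriage with `w` single can only be the diagonal marriage `w_k ↦ m'_k`, and that one is
stable exactly when no such pair exists.
-/

section ListPref

variable {α : Type} [DecidableEq α]

lemma listPref_append_singleton_iff {l : List α} {a e : α} (he : e ∉ l) :
    listPref (l ++ [e]) a e ↔ a ∈ l := by
  constructor
  · rintro ⟨ha, hlt⟩
    rcases List.mem_append.1 ha with ha | ha
    · exact ha
    · obtain rfl := List.mem_singleton.1 ha
      exact absurd (hlt (by simp)) (lt_irrefl _)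
  · intro ha
    refine ⟨List.mem_append_left _ ha, fun _ => ?_⟩
    rw [List.idxOf_append_of_mem ha, List.idxOf_append_of_notMem he, List.idxOf_cons_self]
    have := List.idxOf_lt_length_iff.2 ha
    omega

lemma not_listPref_head {l : List α} {a b : α} : ¬listPref (a :: l) b a := by
  rintro ⟨-, hlt⟩
  have := hlt List.mem_cons_self
  rw [List.idxOf_cons_self] at this
  exact Nat.not_lt_zero _ this

end ListPref

section Lists

variable {n : ℕ} (x y : ℕ → ℕ → Bool)

lemma mem_map_castAdd {l : List (Fin n)} {v : Fin (n + n)} :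
    v ∈ l.map (Fin.castAdd n) ↔ ∃ h : v.val < n, (⟨v.val, h⟩ : Fin n) ∈ l := by
  simp only [List.mem_map]
  constructor
  · rintro ⟨a, ha, rfl⟩
    exact ⟨a.isLt, ha⟩
  · rintro ⟨h, hm⟩
    exact ⟨⟨v.val, h⟩, hm, rfl⟩

lemma mem_sWL_of_lt {u : Fin (n + n)} (hu : u.val < n) (v : Fin (n + n)) :
    v ∈ sWL n x u ↔
      (v.val < n ∧ v.val ≠ u.val ∧ x u.val v.val = true) ∨ v.val = n + u.val := by
  simp only [sWL, dif_pos hu, List.mem_append, mem_map_castAdd, List.mem_filter,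
    List.mem_finRange, true_and, Bool.and_eq_true, decide_eq_true_eq, List.mem_singleton,
    Fin.ext_iff, Fin.natAdd, exists_prop]

lemma mem_sWL_of_eq {u : Fin (n + n)} (hu : u.val = n) (v : Fin (n + n)) :
    v ∈ sWL n x u ↔ n ≤ v.val := by
  simp only [sWL, dif_neg (show ¬u.val < n by omega), if_pos hu, List.mem_map,
    List.mem_finRange, true_and]
  constructor
  · rintro ⟨a, rfl⟩
    simp
  · intro hv
    exact ⟨⟨v.val - n, by omega⟩, Fin.ext (by simp; omega)⟩

lemma sWL_of_gt {u : Fin (n + n)} (hu : n < u.val) : sWL n x u = [] := by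
  simp only [sWL, dif_neg (show ¬u.val < n by omega), if_neg (show u.val ≠ n by omega)]

lemma listPref_sWL_iff {u : Fin (n + n)} (hu : u.val < n)
    {v v' : Fin (n + n)} (hv' : v'.val = n + u.val) :
    listPref (sWL n x u) v v' ↔ v.val < n ∧ v.val ≠ u.val ∧ x u.val v.val = true := by
  obtain rfl : v' = Fin.natAdd n ⟨u.val, hu⟩ := Fin.ext hv'
  simp only [sWL, dif_pos hu]
  rw [listPref_append_singleton_iff (by simp [mem_map_castAdd])]
  simp only [mem_map_castAdd, List.mem_filter, List.mem_finRange, true_and, Bool.and_eq_true,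
    decide_eq_true_eq, exists_prop]

lemma mem_sML_of_lt {v : Fin (n + n)} (hv : v.val < n) (u : Fin (n + n)) :
    u ∈ sML n y v ↔ u.val < n ∧ u.val ≠ v.val ∧ y u.val v.val = true := by
  simp only [sML, dif_pos hv, mem_map_castAdd, List.mem_filter, List.mem_finRange, true_and,
    Bool.and_eq_true, decide_eq_true_eq, exists_prop]

lemma mem_sML_of_le {v : Fin (n + n)} (hv : n ≤ v.val) (u : Fin (n + n)) :
    u ∈ sML n y v ↔ u.val = v.val - n ∨ u.val = n := by
  simp only [sML, dif_neg (show ¬v.val < n by omega), List.mem_cons, List.not_mem_nil,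
    or_false, Fin.ext_iff, Fin.castAdd, Fin.natAdd, Fin.val_castLE]
  omega

lemma not_listPref_sML {v u u' : Fin (n + n)} (hv : n ≤ v.val)
    (hu' : u'.val = v.val - n) : ¬listPref (sML n y v) u u' := by
  simp only [sML, dif_neg (show ¬v.val < n by omega)]
  obtain rfl : u' = Fin.castAdd n ⟨v.val - n, Nat.sub_lt_left_of_lt_add hv v.isLt⟩ :=
    Fin.ext hu'
  exact not_listPref_head

end Lists

section DiagonalMarriage

variable {n : ℕ}

/-- `w_k ↦ m'_k` for every `k`; `w` and the `w'_k` are single. -/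
def diagonalMarriage (n : ℕ) : Fin (n + n) → Option (Fin (n + n)) :=
  fun u => if h : u.val < n then some (Fin.natAdd n ⟨u.val, h⟩) else none

lemma diagonalMarriage_eq_some_iff {u v : Fin (n + n)} :
    diagonalMarriage n u = some v ↔ u.val < n ∧ v.val = n + u.val := by
  unfold diagonalMarriage
  split_ifs with h
  · simp only [h, Option.some.injEq, Fin.ext_iff, Fin.val_natAdd, true_and]
    omega
  · simp [h]

lemma diagonalMarriage_eq_none_iff {u : Fin (n + n)} :
    diagonalMarriage n u = none ↔ n ≤ u.val := by
  unfold diagonalMarriage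
  split_ifs with h
  · simp [h]
  · simp only [true_iff]
    omega

lemma isMarriage_diagonalMarriage : IsMarriage (diagonalMarriage n) := by
  intro u u' v hu hu'
  rw [diagonalMarriage_eq_some_iff] at hu hu'
  exact Fin.ext (by omega)

theorem stableL_diagonalMarriage_iff (x y : ℕ → ℕ → Bool) :
    StableL (sWL n x) (sML n y) (diagonalMarriage n) ↔
      ¬∃ i j : ℕ, i < n ∧ j < n ∧ i ≠ j ∧ x i j = true ∧ y i j = true := by
  constructor
  · rintro ⟨-, hstable⟩ ⟨i, j, hi, hj, hij, hx, hy⟩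
    refine hstable ⟨⟨i, by omega⟩, ⟨j, by omega⟩,
      (mem_sWL_of_lt x hi _).2 (.inl ⟨hj, hij.symm, hx⟩),
      (mem_sML_of_lt y hj _).2 ⟨hi, hij, hy⟩, fun v hv => ?_, fun u hu => ?_⟩
    · exact (listPref_sWL_iff x hi (diagonalMarriage_eq_some_iff.1 hv).2).2 ⟨hj, hij.symm, hx⟩
    · have := (diagonalMarriage_eq_some_iff.1 hu).2
      simp only at this
      omega
  · intro hdisj
    refine ⟨fun u v huv => ?_, ?_⟩
    · obtain ⟨hu, hv⟩ := diagonalMarriage_eq_some_iff.1 huv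
      exact ⟨(mem_sWL_of_lt x hu v).2 (.inr hv),
        (mem_sML_of_le y (by omega) u).2 (.inl (by omega))⟩
    · rintro ⟨u, v, hv, hu, hpref_u, hpref_v⟩
      rcases lt_trichotomy u.val n with hlt | heq | hgt
      · obtain ⟨hvn, hne, hx⟩ :=
          (listPref_sWL_iff x hlt (v' := Fin.natAdd n ⟨u.val, hlt⟩) rfl).1
            (hpref_u _ (diagonalMarriage_eq_some_iff.2 ⟨hlt, rfl⟩))
        exact hdisj ⟨u, v, hlt, hvn, hne.symm, hx, ((mem_sML_of_lt y hvn u).1 hu).2.2⟩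
      · have hvn : n ≤ v.val := (mem_sWL_of_eq x heq v).1 hv
        have hk : v.val - n < n := by omega
        exact not_listPref_sML y hvn (u' := Fin.castAdd n ⟨v.val - n, hk⟩) rfl
          (hpref_v _ (diagonalMarriage_eq_some_iff.2 ⟨hk, by simp; omega⟩))
      · simp [sWL_of_gt x hgt] at hv

theorem eq_diagonalMarriage_of_stableL {x y : ℕ → ℕ → Bool}
    {μ : Fin (n + n) → Option (Fin (n + n))}
    (hμ : StableL (sWL n x) (sML n y) μ) {w : Fin (n + n)} (hw_val : w.val = n)
    (hw : μ w = none) : μ = diagonalMarriage n := by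
  obtain ⟨hon, hstable⟩ := hμ
  -- otherwise `(w, m'_u)` blocks: the only candidates on the list of `m'_u` are `w_u` and `w`
  have married (u : Fin (n + n)) (hu : u.val < n) : μ u = some (Fin.natAdd n ⟨u.val, hu⟩) := by
    by_contra hne
    refine hstable ⟨w, Fin.natAdd n ⟨u.val, hu⟩, (mem_sWL_of_eq x hw_val _).2 (by simp),
      (mem_sML_of_le y (by simp) w).2 (.inr hw_val), by simp [hw], fun u' hu' => ?_⟩
    rcases (mem_sML_of_le y (by simp) u').1 (hon _ _ hu').2 with h | h
    · obtain rfl : u' = u := Fin.ext (by simpa using h)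
      exact absurd hu' hne
    · obtain rfl : u' = w := Fin.ext (h.trans hw_val.symm)
      simp [hw] at hu'
  funext u
  rcases lt_trichotomy u.val n with hlt | heq | hgt
  · rw [married u hlt, eq_comm, diagonalMarriage_eq_some_iff]
    exact ⟨hlt, rfl⟩
  · obtain rfl : u = w := Fin.ext (heq.trans hw_val.symm)
    rw [hw, eq_comm, diagonalMarriage_eq_none_iff]
    omega
  · rw [(diagonalMarriage_eq_none_iff (u := u)).2 hgt.le, Option.eq_none_iff_forall_ne_some]
    intro v hv
    simpa [sWL_of_gt x hgt] using (hon u v hv).1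

end DiagonalMarriage

/-- The designated woman `w` is single in some stable marriage with respect to the
preference lists constructed from `x` and `y` if and only if there is no pair
`(i, j)` with `i ≠ j` and `x^i_j = y^i_j = 1`. -/
theorem single_iff_disjoint (n : ℕ) (hn : 0 < n) (x y : ℕ → ℕ → Bool) :
    (∃ μ : Fin (n + n) → Option (Fin (n + n)),
        IsMarriage μ ∧ StableL (sWL n x) (sML n y) μ ∧ μ (Fin.natAdd n ⟨0, hn⟩) = none) ↔
      ¬∃ i j : ℕ, i < n ∧ j < n ∧ i ≠ j ∧ x i j = true ∧ y i j = true := by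
  rw [← stableL_diagonalMarriage_iff]
  constructor
  · rintro ⟨μ, -, hμ, hw⟩
    rwa [eq_diagonalMarriage_of_stableL hμ (by simp) hw] at hμ
  · intro hstable
    exact ⟨diagonalMarriage n, isMarriage_diagonalMarriage, hstable,
      diagonalMarriage_eq_none_iff.2 (by simp)⟩
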